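/- Let A be a bounded distributive lattice and κ an infinite regular cardinal. Then BL_κ A = pH A if and only if every relative annihilator of A belongs to BL_κ A and pH A, with its inherited order, is a κ-frame. -/

import Mathlib

open Cardinal

section Defs

variable {A : Type*} [SemilatticeInf A]

/-- `S ⊆ A` is admissible, with distributive join `x`: the join of `S` is `x` and
for every `a`, `a ⊓ x` is the join of `{a ⊓ s : s ∈ S}`. -/
def IsDistJoin (S : Set A) (x : A) : Prop :=
  IsLUB S x ∧ ∀ a : A, IsLUB ((fun s => a ⊓ s) '' S) (a ⊓ x)

/-- A D-ideal of the meet-semilattice `A`: a downset closed under joins of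
admissible subsets. -/
def IsDIdeal (E : Set A) : Prop :=
  IsLowerSet E ∧ ∀ S : Set A, S ⊆ E → ∀ x : A, IsDistJoin S x → x ∈ E

/-- `J` is the join of the family `T` in the Bruns–Lakser completion `BL A`:
the least D-ideal containing `⋃₀ T`. -/
def IsBLJoin (T : Set (Set A)) (J : Set A) : Prop :=
  IsDIdeal J ∧ ⋃₀ T ⊆ J ∧ ∀ E : Set A, IsDIdeal E → ⋃₀ T ⊆ E → J ⊆ E

/-- A family of D-ideals closed under finite meets (intersections, including the
top `Set.univ` of `BL A`) and under κ-joins computed in `BL A`. -/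
def BLClosed (κ : Cardinal) (C : Set (Set A)) : Prop :=
  Set.univ ∈ C ∧ (∀ E ∈ C, ∀ F ∈ C, E ∩ F ∈ C) ∧
    ∀ T : Set (Set A), T ⊆ C → #T < κ → ∀ J : Set A, IsBLJoin T J → J ∈ C

/-- The sub-κ-frame of `BL A` generated by `G`: the smallest subset of `BL A`
containing `G` and closed under finite meets and κ-joins computed in `BL A`. -/
def BLKappa (κ : Cardinal) (G : Set (Set A)) : Set (Set A) :=
  ⋂₀ {C : Set (Set A) | G ⊆ C ∧ C ⊆ {E : Set A | IsDIdeal E} ∧ BLClosed κ C}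

/-- A normal ideal: a downset `N` with `N = Nᵘˡ`. -/
def IsNormalIdeal (N : Set A) : Prop :=
  IsLowerSet N ∧ N = lowerBounds (upperBounds N)

/-- The relative annihilator `⟨a,b⟩ = {x : a ⊓ x ≤ b}`. -/
def RelAnn (a b : A) : Set A := {x : A | a ⊓ x ≤ b}

end Defs

/-- κ-completeness: every κ-join exists. -/
def IsKappaComplete (A : Type*) [Preorder A] (κ : Cardinal) : Prop :=
  ∀ S : Set A, #S < κ → ∃ x : A, IsLUB S x

/-- κJD: every existing κ-join is a distributive join. -/
def IsKappaJD (A : Type*) [SemilatticeInf A] (κ : Cardinal) : Prop :=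
  ∀ S : Set A, #S < κ → ∀ x : A, IsLUB S x → IsDistJoin S x

/-- A κ-frame: a κ-complete and κJD meet-semilattice. -/
def IsKappaFrame (A : Type*) [SemilatticeInf A] (κ : Cardinal) : Prop :=
  IsKappaComplete A κ ∧ IsKappaJD A κ

/-- A family of subsets of `α` closed under binary intersections is a
meet-semilattice in the inherited (inclusion) order, meets being intersections. -/
def subSemilatticeInf {α : Type*} (B : Set (Set α))
    (hmeet : ∀ E ∈ B, ∀ F ∈ B, E ∩ F ∈ B) : SemilatticeInf ↥B :=
  { (inferInstance : PartialOrder ↥B) with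
    inf := fun E F => ⟨E.1 ∩ F.1, hmeet _ E.2 _ F.2⟩
    inf_le_left := fun _ _ _ hx => hx.1
    inf_le_right := fun _ _ _ hx => hx.2
    le_inf := fun _ _ _ h1 h2 _ hx => ⟨h1 hx, h2 hx⟩ }

/-- The closure conditions defining the proHeyting extension inside `BL A`:
containing every relative annihilator, the top and bottom of `BL A`, and closed
under binary meets (intersections) and binary joins of `BL A`. -/
def PHClosed {A : Type*} [SemilatticeInf A] (C : Set (Set A)) : Prop :=
  (∀ a b : A, RelAnn a b ∈ C) ∧
  Set.univ ∈ C ∧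
  (∀ J : Set A, IsBLJoin (∅ : Set (Set A)) J → J ∈ C) ∧
  (∀ E ∈ C, ∀ F ∈ C, E ∩ F ∈ C) ∧
  (∀ E ∈ C, ∀ F ∈ C, ∀ J : Set A, IsBLJoin {E, F} J → J ∈ C)

/-- The proHeyting extension `pH A`: the bounded sublattice of `BL A` generated by
the relative annihilators of `A`. -/
def pHExt (A : Type*) [SemilatticeInf A] : Set (Set A) :=
  ⋂₀ {C : Set (Set A) | C ⊆ {E : Set A | IsDIdeal E} ∧ PHClosed C}

theorem pHExt_inter_mem {A : Type*} [SemilatticeInf A] :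
    ∀ E ∈ pHExt A, ∀ F ∈ pHExt A, E ∩ F ∈ pHExt A := by
  intro E hE F hF
  rw [pHExt, Set.mem_sInter] at hE hF ⊢
  intro C hC
  exact hC.2.2.2.2.1 E (hE C hC) F (hF C hC)

/-- `pH A` with its inherited order is a meet-semilattice. -/
instance pHExtSemilatticeInf (A : Type*) [SemilatticeInf A] :
    SemilatticeInf ↥(pHExt A) :=
  subSemilatticeInf (pHExt A) pHExt_inter_mem

/-!
Both directions turn on one fact: `pH A` is closed under the κ-joins of `BL A` exactly when it
is a κ-frame. If it is closed, its κ-joins are those of the frame `BL A`, hence distributive.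
Conversely, let `x` be a distributive join of `S` in `pH A` and `c ∈ x`. Meeting with
`↓c = ⟨⊤, c⟩` and testing against `↓c ∩ ⟨p, m⟩ ∈ pH A` shows that `c` is a distributive join in
`A` of the elements of `⋃ S` below `c`, so `x` lies in every D-ideal containing `⋃ S`, i.e. it is
the join of `S` in `BL A`.

Granting this, `BL_κ A ⊆ pH A` because `pH A` contains the principal ideals and is closed under
the operations generating `BL_κ A`, and `pH A ⊆ BL_κ A` because, `κ` being infinite, `BL_κ A` is
closed under the finite joins and meets generating `pH A` once it contains the annihilators.
-/

section DIdeal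

variable {A : Type*} [SemilatticeInf A]

lemma IsDistJoin.inf_left {S : Set A} {x : A} (h : IsDistJoin S x) (u : A) :
    IsDistJoin ((u ⊓ ·) '' S) (u ⊓ x) := by
  refine ⟨h.2 u, fun p => ?_⟩
  simpa only [Set.image_image, inf_assoc] using h.2 (p ⊓ u)

lemma isDistJoin_of_forall_inf_le [OrderTop A] {S : Set A} {c : A} (hS : ∀ s ∈ S, s ≤ c)
    (h : ∀ p m : A, (∀ s ∈ S, p ⊓ s ≤ m) → p ⊓ c ≤ m) : IsDistJoin S c := by
  refine ⟨⟨hS, fun m hm => ?_⟩, fun p => ⟨?_, fun m hm => h p m fun s hs => hm ⟨s, hs, rfl⟩⟩⟩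
  · simpa using h ⊤ m fun s hs => inf_le_right.trans (hm hs)
  · rintro _ ⟨s, hs, rfl⟩
    exact inf_le_inf_left p (hS s hs)

lemma isDIdeal_univ : IsDIdeal (Set.univ : Set A) :=
  ⟨isLowerSet_univ, fun _ _ _ _ => trivial⟩

lemma IsDIdeal.inter {E F : Set A} (hE : IsDIdeal E) (hF : IsDIdeal F) : IsDIdeal (E ∩ F) :=
  ⟨hE.1.inter hF.1, fun S hS x hx =>
    ⟨hE.2 S (fun _ hs => (hS hs).1) x hx, hF.2 S (fun _ hs => (hS hs).2) x hx⟩⟩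

lemma isDIdeal_Iic (a : A) : IsDIdeal (Set.Iic a) :=
  ⟨isLowerSet_Iic a, fun _ hS _ hx => hx.1.2 hS⟩

lemma isDIdeal_relAnn (a b : A) : IsDIdeal (RelAnn a b) :=
  ⟨fun _ _ hzy hy => (inf_le_inf_left a hzy).trans hy,
    fun S hS _ hx => (hx.2 a).2 (by rintro _ ⟨s, hs, rfl⟩; exact hS hs)⟩

lemma Iic_eq_relAnn_top [OrderTop A] (a : A) : Set.Iic a = RelAnn ⊤ a := by
  ext x; simp [RelAnn]

end DIdeal

section BLJoin

variable {A : Type*} [SemilatticeInf A]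

def blJoin (U : Set A) : Set A := ⋂₀ {W : Set A | IsDIdeal W ∧ U ⊆ W}

lemma isDIdeal_blJoin (U : Set A) : IsDIdeal (blJoin U) :=
  ⟨fun _ _ hzy hy W hW => hW.1.1 hzy (hy W hW),
    fun S hS x hx W hW => hW.1.2 S (fun _ hs => hS hs W hW) x hx⟩

lemma subset_blJoin (U : Set A) : U ⊆ blJoin U :=
  fun _ hz _ hW => hW.2 hz

lemma blJoin_subset {U W : Set A} (hW : IsDIdeal W) (hUW : U ⊆ W) : blJoin U ⊆ W :=
  Set.sInter_subset_of_mem ⟨hW, hUW⟩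

lemma isBLJoin_blJoin (T : Set (Set A)) : IsBLJoin T (blJoin (⋃₀ T)) :=
  ⟨isDIdeal_blJoin _, subset_blJoin _, fun _ hE hTE => blJoin_subset hE hTE⟩

lemma IsBLJoin.unique {T : Set (Set A)} {J J' : Set A} (h : IsBLJoin T J)
    (h' : IsBLJoin T J') : J = J' :=
  (h.2.2 J' h'.1 h'.2.1).antisymm (h'.2.2 J h.1 h.2.1)

/-- Frame distributivity of `BL A`. -/
lemma inter_blJoin_subset {a U : Set A} (ha : IsLowerSet a) (hU : IsLowerSet U) :
    a ∩ blJoin U ⊆ blJoin (a ∩ U) := by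
  have hJ := isDIdeal_blJoin (a ∩ U)
  let F : Set A := {z | ∀ u ∈ a, u ⊓ z ∈ blJoin (a ∩ U)}
  have hF : IsDIdeal F :=
    ⟨fun _ _ hzy hy u hu => hJ.1 (inf_le_inf_left u hzy) (hy u hu),
      fun S hS x hx u hu => hJ.2 _ (by rintro _ ⟨s, hs, rfl⟩; exact hS hs u hu) _
        (hx.inf_left u)⟩
  have hUF : U ⊆ F := fun z hz u hu =>
    subset_blJoin _ ⟨ha inf_le_left hu, hU inf_le_right hz⟩
  intro z ⟨hza, hzU⟩
  simpa using blJoin_subset hF hUF hzU z hza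

def BLJoinClosed (κ : Cardinal) (C : Set (Set A)) : Prop :=
  ∀ T : Set (Set A), T ⊆ C → #T < κ → ∀ J : Set A, IsBLJoin T J → J ∈ C

lemma BLClosed.blJoinClosed {κ : Cardinal} {C : Set (Set A)} (h : BLClosed κ C) :
    BLJoinClosed κ C :=
  h.2.2

lemma BLClosed.phClosed {κ : Cardinal} {C : Set (Set A)} (h : BLClosed κ C) (hκ : ℵ₀ ≤ κ)
    (hAnn : ∀ a b : A, RelAnn a b ∈ C) : PHClosed C := by
  have hfin : ∀ T : Set (Set A), T.Finite → #T < κ := fun T hT =>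
    hT.lt_aleph0.trans_le hκ
  refine ⟨hAnn, h.1, h.2.2 ∅ (Set.empty_subset _) (hfin _ Set.finite_empty), h.2.1,
    fun E hE F hF => h.2.2 _ ?_ (hfin _ (Set.toFinite _))⟩
  rintro X (rfl | rfl)
  exacts [hE, hF]

end BLJoin

section Generated

variable {A : Type*} [SemilatticeInf A]

lemma blClosed_blKappa (κ : Cardinal) (G : Set (Set A)) : BLClosed κ (BLKappa κ G) :=
  ⟨fun _ hC => hC.2.2.1, fun E hE F hF C hC => hC.2.2.2.1 E (hE C hC) F (hF C hC),
    fun T hT hκ J hJ C hC => hC.2.2.2.2 T (fun _ hE => hT hE C hC) hκ J hJ⟩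

lemma blKappa_subset {κ : Cardinal} {G C : Set (Set A)} (hG : G ⊆ C)
    (hC : C ⊆ {E | IsDIdeal E}) (hCκ : BLClosed κ C) : BLKappa κ G ⊆ C :=
  Set.sInter_subset_of_mem ⟨hG, hC, hCκ⟩

lemma blKappa_subset_dIdeals (κ : Cardinal) :
    BLKappa κ (Set.range (Set.Iic : A → Set A)) ⊆ {E | IsDIdeal E} :=
  blKappa_subset (by rintro _ ⟨a, rfl⟩; exact isDIdeal_Iic a) le_rfl
    ⟨isDIdeal_univ, fun _ hE _ hF => hE.inter hF, fun _ _ _ _ hJ => hJ.1⟩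

lemma pHExt_subset {C : Set (Set A)} (hC : C ⊆ {E | IsDIdeal E}) (hCpH : PHClosed C) :
    pHExt A ⊆ C :=
  Set.sInter_subset_of_mem ⟨hC, hCpH⟩

lemma pHExt_subset_dIdeals : pHExt A ⊆ {E | IsDIdeal E} :=
  pHExt_subset le_rfl ⟨isDIdeal_relAnn, isDIdeal_univ, fun _ hJ => hJ.1,
    fun _ hE _ hF => hE.inter hF, fun _ _ _ _ _ hJ => hJ.1⟩

lemma relAnn_mem_pHExt (a b : A) : RelAnn a b ∈ pHExt A :=
  fun _ hC => hC.2.1 a b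

lemma Iic_mem_pHExt [OrderTop A] (a : A) : Set.Iic a ∈ pHExt A :=
  Iic_eq_relAnn_top a ▸ relAnn_mem_pHExt ⊤ a

lemma blClosed_pHExt {κ : Cardinal} (h : BLJoinClosed κ (pHExt A)) : BLClosed κ (pHExt A) :=
  ⟨fun _ hC => hC.2.2.1, pHExt_inter_mem, h⟩

end Generated

section KappaFrame

variable {A : Type*} [SemilatticeInf A]

lemma isLUB_pHExt_blJoin {S : Set (pHExt A)} (hJ : blJoin (⋃₀ (Subtype.val '' S)) ∈ pHExt A) :
    IsLUB S ⟨blJoin (⋃₀ (Subtype.val '' S)), hJ⟩ :=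
  ⟨fun s hs _ hz => subset_blJoin _ ⟨s, ⟨s, hs, rfl⟩, hz⟩,
    fun F hF => blJoin_subset (pHExt_subset_dIdeals F.2)
      (by rintro z ⟨_, ⟨s, hs, rfl⟩, hz⟩; exact hF hs hz)⟩

lemma isDistJoin_pHExt_blJoin {S : Set (pHExt A)}
    (hJ : blJoin (⋃₀ (Subtype.val '' S)) ∈ pHExt A) :
    IsDistJoin S ⟨blJoin (⋃₀ (Subtype.val '' S)), hJ⟩ := by
  have hLUB := isLUB_pHExt_blJoin hJ
  refine ⟨hLUB, fun a => ⟨?_, fun F hF => ?_⟩⟩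
  · rintro _ ⟨s, hs, rfl⟩
    exact inf_le_inf_left a (hLUB.1 hs)
  · have hT : IsLowerSet (⋃₀ (Subtype.val '' S)) := by
      rintro y z hzy ⟨_, ⟨s, hs, rfl⟩, hy⟩
      exact ⟨s, ⟨s, hs, rfl⟩, (pHExt_subset_dIdeals s.2).1 hzy hy⟩
    refine (inter_blJoin_subset (pHExt_subset_dIdeals a.2).1 hT).trans
      (blJoin_subset (pHExt_subset_dIdeals F.2) ?_)
    rintro z ⟨hza, _, ⟨s, hs, rfl⟩, hzs⟩
    exact hF ⟨s, hs, rfl⟩ ⟨hza, hzs⟩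

lemma inf_le_of_isDistJoin_pHExt [OrderTop A] {S : Set (pHExt A)} {x : pHExt A}
    (hx : IsDistJoin S x) {c : A} (hc : c ∈ x.1) {p m : A}
    (hm : ∀ s ∈ Set.Iic c ∩ ⋃₀ (Subtype.val '' S), p ⊓ s ≤ m) : p ⊓ c ≤ m := by
  let a : pHExt A := ⟨Set.Iic c, Iic_mem_pHExt c⟩
  let w : pHExt A := a ⊓ ⟨RelAnn p m, relAnn_mem_pHExt p m⟩
  have hw : w ∈ upperBounds ((a ⊓ ·) '' S) := by
    rintro _ ⟨s, hs, rfl⟩ z ⟨hzc, hzs⟩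
    exact ⟨hzc, hm z ⟨hzc, s, ⟨s, hs, rfl⟩, hzs⟩⟩
  exact ((hx.2 a).2 hw (show c ∈ (a ⊓ x).1 from ⟨le_rfl, hc⟩)).2

lemma isBLJoin_of_isDistJoin_pHExt [OrderTop A] {S : Set (pHExt A)} {x : pHExt A}
    (hx : IsDistJoin S x) : IsBLJoin (Subtype.val '' S) x.1 := by
  refine ⟨pHExt_subset_dIdeals x.2, ?_, fun E hE hSE c hc => ?_⟩
  · rintro z ⟨_, ⟨s, hs, rfl⟩, hz⟩
    exact hx.1.1 hs hz
  · have hdist : IsDistJoin (Set.Iic c ∩ ⋃₀ (Subtype.val '' S)) c :=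
      isDistJoin_of_forall_inf_le (fun _ hs => hs.1)
        fun _ _ hm => inf_le_of_isDistJoin_pHExt hx hc hm
    exact hE.2 _ (fun _ hs => hSE hs.2) c hdist

lemma isKappaFrame_pHExt_iff [OrderTop A] {κ : Cardinal} :
    IsKappaFrame (pHExt A) κ ↔ BLJoinClosed κ (pHExt A) := by
  constructor
  · rintro ⟨hComplete, hJD⟩ T hT hTκ J hJ
    have hS : #(Subtype.val ⁻¹' T : Set (pHExt A)) < κ :=
      (mk_preimage_of_injective _ _ Subtype.val_injective).trans_lt hTκ
    obtain ⟨x, hx⟩ := hComplete _ hS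
    have hx' := isBLJoin_of_isDistJoin_pHExt (hJD _ hS x hx)
    rw [Subtype.image_preimage_coe, Set.inter_eq_right.2 hT] at hx'
    exact hJ.unique hx' ▸ x.2
  · intro hClosed
    have hJ : ∀ S : Set (pHExt A), #S < κ → blJoin (⋃₀ (Subtype.val '' S)) ∈ pHExt A :=
      fun S hS => hClosed _ (by rintro _ ⟨s, -, rfl⟩; exact s.2)
        (mk_image_le.trans_lt hS) _ (isBLJoin_blJoin _)
    refine ⟨fun S hS => ⟨_, isLUB_pHExt_blJoin (hJ S hS)⟩, fun S hS x hx => ?_⟩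
    rw [hx.unique (isLUB_pHExt_blJoin (hJ S hS))]
    exact isDistJoin_pHExt_blJoin _

end KappaFrame

/-- For a bounded distributive lattice `A` and an infinite regular
cardinal `κ`: `BL_κ A = pH A` iff every relative annihilator of `A` belongs to
`BL_κ A` and `pH A`, with its inherited order, is a κ-frame. -/
theorem BLKappa_eq_pHExt_iff (A : Type*) [DistribLattice A] [BoundedOrder A]
    (κ : Cardinal) (hκ : κ.IsRegular) :
    BLKappa κ (Set.range (Set.Iic : A → Set A)) = pHExt A ↔
      ((∀ a b : A, RelAnn a b ∈ BLKappa κ (Set.range (Set.Iic : A → Set A))) ∧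
        IsKappaFrame ↥(pHExt A) κ) := by
  rw [isKappaFrame_pHExt_iff]
  constructor
  · intro h
    refine ⟨fun a b => h ▸ relAnn_mem_pHExt a b, ?_⟩
    exact h ▸ (blClosed_blKappa κ _).blJoinClosed
  · rintro ⟨hAnn, hClosed⟩
    refine (blKappa_subset ?_ pHExt_subset_dIdeals (blClosed_pHExt hClosed)).antisymm
      (pHExt_subset (blKappa_subset_dIdeals κ)
        ((blClosed_blKappa κ _).phClosed hκ.aleph0_le hAnn))
    rintro _ ⟨a, rfl⟩
    exact Iic_mem_pHExt a
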